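/- Let f ∈ ℂ[x,y] of total degree D ≥ 1 and p ∈ ℂ² with f(p) ≠ 0. Then for every k with 1 ≤ k ≤ D, |∂^k f/∂x^k (p)|·|f(p)|^{−1} ≤ (D / sep(p, V(f)))^k, where sep(p, V(f)) is the Euclidean distance from p to the zero set of f. (Here the restriction of f to the horizontal line through p is used; if that restriction is constant, the left side is 0 and the bound holds trivially.) -/

import Mathlib

/-!
Restrict `f` to the horizontal line through `p`: this gives `g ∈ ℂ[X]` of degree `n ≤ D` with
`g(p₀) = f(p)` and `g⁽ᵏ⁾(p₀) = ∂ᵏf/∂xᵏ(p)`. Every root `r` of `g` yields the zero `(r, p₁)` of `f`,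
so `|p₀ - r| ≥ d := sep(p, V(f))`. Writing `g(p₀ + X) = a ∏ᵢ (X + (p₀ - rᵢ))`, the `k`-th Taylor
coefficient is `a · e_{n-k}(p₀ - rᵢ)`, and each of its `C(n, k)` terms misses `k` factors of modulus
`≥ d` from `∏ᵢ (p₀ - rᵢ) = g(p₀) / a`. Hence `|g⁽ᵏ⁾(p₀)| ≤ k! C(n, k) d⁻ᵏ |g(p₀)| ≤ (n / d)ᵏ |g(p₀)|`.
-/

open Polynomial

namespace Multiset

variable {K : Type*} [NormedField K] {d : ℝ}

theorem pow_card_le_norm_prod (hd : 0 ≤ d) {s : Multiset K} (h : ∀ x ∈ s, d ≤ ‖x‖) :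
    d ^ card s ≤ ‖s.prod‖ := by
  induction s using Multiset.induction_on with
  | empty => simp
  | cons a s ih =>
    rw [card_cons, prod_cons, norm_mul, pow_succ']
    exact mul_le_mul (h a (mem_cons_self a s)) (ih fun x hx => h x (mem_cons_of_mem hx))
      (pow_nonneg hd _) (norm_nonneg _)

theorem norm_prod_mul_pow_le_of_le (hd : 0 ≤ d) {s t : Multiset K} (h : ∀ x ∈ s, d ≤ ‖x‖)
    (hts : t ≤ s) : ‖t.prod‖ * d ^ (card s - card t) ≤ ‖s.prod‖ := by
  obtain ⟨u, rfl⟩ := le_iff_exists_add.mp hts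
  rw [card_add, Nat.add_sub_cancel_left, prod_add, norm_mul]
  exact mul_le_mul_of_nonneg_left
    (pow_card_le_norm_prod hd fun x hx => h x (mem_add.mpr (Or.inr hx))) (norm_nonneg _)

theorem norm_esymm_mul_pow_le (hd : 0 ≤ d) {s : Multiset K} (h : ∀ x ∈ s, d ≤ ‖x‖) {k : ℕ}
    (hk : k ≤ card s) : ‖s.esymm (card s - k)‖ * d ^ k ≤ (card s).choose k * ‖s.prod‖ := by
  have hterm : ∀ t ∈ s.powersetCard (card s - k), ‖t.prod‖ * d ^ k ≤ ‖s.prod‖ := by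
    intro t ht
    obtain ⟨hts, hcard⟩ := mem_powersetCard.mp ht
    simpa [hcard, Nat.sub_sub_self hk] using norm_prod_mul_pow_le_of_le hd h hts
  calc ‖s.esymm (card s - k)‖ * d ^ k
      ≤ ((s.powersetCard (card s - k)).map fun t => ‖t.prod‖ * d ^ k).sum := by
        rw [esymm, sum_map_mul_right]
        gcongr
        simpa only [map_map, Function.comp_def] using
          norm_multiset_sum_le ((s.powersetCard (card s - k)).map prod)
    _ ≤ (card s).choose k * ‖s.prod‖ := by
        refine (sum_le_card_nsmul _ ‖s.prod‖ fun x hx => ?_).trans_eq ?_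
        · obtain ⟨t, ht, rfl⟩ := mem_map.mp hx
          exact hterm t ht
        · rw [card_map, card_powersetCard, Nat.choose_symm hk, nsmul_eq_mul]

end Multiset

namespace Polynomial.Splits

variable {K : Type*} [NormedField K] {g : K[X]}

theorem taylor_eq_prod_roots (hg : g.Splits) (z : K) :
    Polynomial.taylor z g
      = C g.leadingCoeff * ((g.roots.map (z - ·)).map fun r => X + C r).prod := by
  conv_lhs => rw [hg.eq_prod_roots]
  rw [← taylorAlgHom_apply, map_mul, taylorAlgHom_apply, taylor_C, map_multiset_prod,
    Multiset.map_map, Multiset.map_map]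
  congr 2
  refine Multiset.map_congr rfl fun r _ => ?_
  simp only [Function.comp_apply, taylorAlgHom_apply, map_sub, taylor_X, taylor_C]
  ring

theorem eval_hasseDeriv_eq_esymm (hg : g.Splits) (z : K) {k : ℕ} (hk : k ≤ g.natDegree) :
    (hasseDeriv k g).eval z
      = g.leadingCoeff * (g.roots.map (z - ·)).esymm (g.natDegree - k) := by
  have hcard : Multiset.card (g.roots.map (z - ·)) = g.natDegree := by
    rw [Multiset.card_map, hg.natDegree_eq_card_roots]
  rw [← taylor_coeff, hg.taylor_eq_prod_roots, coeff_C_mul,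
    Multiset.prod_X_add_C_coeff _ (hcard ▸ hk), hcard]

variable {d : ℝ}

theorem norm_eval_hasseDeriv_mul_pow_le (hg : g.Splits) {z : K} (hd : 0 ≤ d)
    (hroots : ∀ r ∈ g.roots, d ≤ ‖z - r‖) (k : ℕ) :
    ‖(hasseDeriv k g).eval z‖ * d ^ k ≤ g.natDegree.choose k * ‖g.eval z‖ := by
  rcases lt_or_ge g.natDegree k with hk | hk
  · rw [hasseDeriv_eq_zero_of_lt_natDegree g k hk, Nat.choose_eq_zero_of_lt hk]
    simp
  have hcard : Multiset.card (g.roots.map (z - ·)) = g.natDegree := by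
    rw [Multiset.card_map, hg.natDegree_eq_card_roots]
  have hesymm := Multiset.norm_esymm_mul_pow_le hd (s := g.roots.map (z - ·))
    (fun x hx => by obtain ⟨r, hr, rfl⟩ := Multiset.mem_map.mp hx; exact hroots r hr)
    (hcard ▸ hk)
  rw [hcard] at hesymm
  rw [hg.eval_hasseDeriv_eq_esymm z hk, hg.eval_eq_prod_roots, norm_mul, norm_mul]
  calc _ = ‖g.leadingCoeff‖ * (‖(g.roots.map (z - ·)).esymm (g.natDegree - k)‖ * d ^ k) := by
        ring
    _ ≤ ‖g.leadingCoeff‖ * (g.natDegree.choose k * ‖(g.roots.map (z - ·)).prod‖) := by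
        gcongr
    _ = _ := by ring

theorem norm_eval_iterate_derivative_mul_pow_le (hg : g.Splits) {z : K} (hd : 0 ≤ d)
    (hroots : ∀ r ∈ g.roots, d ≤ ‖z - r‖) (k : ℕ) :
    ‖(derivative^[k] g).eval z‖ * d ^ k ≤ g.natDegree ^ k * ‖g.eval z‖ := by
  have hfactorial : ‖((k.factorial : ℕ) : K)‖ ≤ k.factorial := by
    simpa using Nat.norm_cast_le (α := K) k.factorial
  have hdesc : (k.factorial * g.natDegree.choose k : ℝ) ≤ g.natDegree ^ k := by
    exact_mod_cast (Nat.descFactorial_eq_factorial_mul_choose _ _).symm.trans_le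
      (Nat.descFactorial_le_pow _ _)
  rw [← factorial_smul_hasseDeriv, LinearMap.smul_apply, eval_smul, nsmul_eq_mul, norm_mul,
    mul_assoc]
  calc ‖((k.factorial : ℕ) : K)‖ * (‖(hasseDeriv k g).eval z‖ * d ^ k)
      ≤ k.factorial * (g.natDegree.choose k * ‖g.eval z‖) :=
        mul_le_mul hfactorial (hg.norm_eval_hasseDeriv_mul_pow_le hd hroots k)
          (by positivity) (by positivity)
    _ ≤ g.natDegree ^ k * ‖g.eval z‖ := by
        rw [← mul_assoc]
        exact mul_le_mul_of_nonneg_right hdesc (norm_nonneg _)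

theorem norm_eval_iterate_derivative_div_le (hg : g.Splits) {z : K} (hd : 0 < d)
    (hroots : ∀ r ∈ g.roots, d ≤ ‖z - r‖) (hz : g.eval z ≠ 0) (k : ℕ) :
    ‖(derivative^[k] g).eval z‖ / ‖g.eval z‖ ≤ (g.natDegree / d) ^ k := by
  rw [div_pow, div_le_div_iff₀ (norm_pos_iff.mpr hz) (pow_pos hd k)]
  exact hg.norm_eval_iterate_derivative_mul_pow_le hd.le hroots k

end Polynomial.Splits

namespace MvPolynomial

variable {R : Type*} [CommSemiring R]

noncomputable def restrictHorizontal (c : R) : MvPolynomial (Fin 2) R →ₐ[R] R[X] :=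
  aeval ![Polynomial.X, Polynomial.C c]

theorem restrictHorizontal_pderiv_zero (c : R) (f : MvPolynomial (Fin 2) R) :
    restrictHorizontal c (pderiv 0 f) = derivative (restrictHorizontal c f) := by
  induction f using MvPolynomial.induction_on with
  | C a => simp [restrictHorizontal]
  | add f g hf hg => simp only [map_add, hf, hg]
  | mul_X f i hf =>
    simp only [pderiv_mul, map_add, map_mul, hf, derivative_mul]
    fin_cases i <;> simp [restrictHorizontal]

theorem restrictHorizontal_iterate_pderiv_zero (c : R) (f : MvPolynomial (Fin 2) R) (k : ℕ) :
    restrictHorizontal c ((pderiv 0)^[k] f) = derivative^[k] (restrictHorizontal c f) := by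
  induction k with
  | zero => rfl
  | succ k ih =>
    rw [Function.iterate_succ_apply', Function.iterate_succ_apply', restrictHorizontal_pderiv_zero,
      ih]

theorem eval_restrictHorizontal (a c : R) (f : MvPolynomial (Fin 2) R) :
    (restrictHorizontal c f).eval a = eval ![a, c] f := by
  induction f using MvPolynomial.induction_on with
  | C b => simp [restrictHorizontal]
  | add f g hf hg => simp only [map_add, Polynomial.eval_add, hf, hg]
  | mul_X f i hf => fin_cases i <;> simp [restrictHorizontal, ← hf]

theorem eval_eq_eval_restrictHorizontal (x : Fin 2 → R) (f : MvPolynomial (Fin 2) R) :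
    eval x f = (restrictHorizontal (x 1) f).eval (x 0) := by
  rw [eval_restrictHorizontal]
  congr
  funext i
  fin_cases i <;> rfl

theorem natDegree_restrictHorizontal_le (c : R) (f : MvPolynomial (Fin 2) R) :
    (restrictHorizontal c f).natDegree ≤ f.totalDegree := by
  conv_lhs => rw [f.as_sum, map_sum]
  refine natDegree_sum_le_of_forall_le _ _ fun m hm => ?_
  rw [restrictHorizontal, aeval_monomial, Finsupp.prod_fintype _ _ (by simp), Fin.prod_univ_two,
    Algebra.algebraMap_eq_smul_one, smul_one_mul]
  refine (natDegree_smul_le _ _).trans ?_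
  refine natDegree_mul_le.trans ?_
  refine le_trans ?_ (le_totalDegree hm)
  rw [Finsupp.sum_fintype _ _ (by simp), Fin.sum_univ_two]
  simp only [Matrix.cons_val_zero, Matrix.cons_val_one, ← Polynomial.C_pow,
    Polynomial.natDegree_C]
  exact add_le_add (natDegree_X_pow_le _) (Nat.zero_le _)

end MvPolynomial

open MvPolynomial Metric

theorem EuclideanSpace.dist_toLp_fin_two_left {𝕜 : Type*} [RCLike 𝕜]
    (p : EuclideanSpace 𝕜 (Fin 2)) (a : 𝕜) : dist p (WithLp.toLp 2 ![a, p 1]) = ‖p 0 - a‖ := by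
  rw [EuclideanSpace.dist_eq, Fin.sum_univ_two]
  simp [dist_eq_norm]

theorem toLp_mem_zeroSet_of_mem_roots {f : MvPolynomial (Fin 2) ℂ} {c r : ℂ}
    (hr : r ∈ (restrictHorizontal c f).roots) :
    WithLp.toLp 2 ![r, c] ∈ {x : EuclideanSpace ℂ (Fin 2) | eval x f = 0} := by
  simpa [eval_restrictHorizontal] using (mem_roots'.mp hr).2

theorem stmt17_general (f : MvPolynomial (Fin 2) ℂ)
    (D : ℕ) (hD : f.totalDegree = D)
    (p : EuclideanSpace ℂ (Fin 2)) (hp : MvPolynomial.eval p f ≠ 0)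
    (k : ℕ) (hk1 : 1 ≤ k) :
    ‖MvPolynomial.eval p ((MvPolynomial.pderiv (0 : Fin 2))^[k] f)‖
        * ‖MvPolynomial.eval p f‖⁻¹
      ≤ (D / infDist p {x : EuclideanSpace ℂ (Fin 2) | MvPolynomial.eval x f = 0}) ^ k := by
  set V := {x : EuclideanSpace ℂ (Fin 2) | MvPolynomial.eval x f = 0}
  set g := restrictHorizontal (p 1) f
  have hg : g.Splits := IsAlgClosed.splits g
  have hgz : g.eval (p 0) ≠ 0 := eval_eq_eval_restrictHorizontal p f ▸ hp
  rw [eval_eq_eval_restrictHorizontal, eval_eq_eval_restrictHorizontal,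
    restrictHorizontal_iterate_pderiv_zero, ← div_eq_mul_inv]
  rcases V.eq_empty_or_nonempty with hV | hV
  · -- `infDist p ∅ = 0`, but then `g` has no roots and is constant.
    have hroots : g.roots = 0 := Multiset.eq_zero_of_forall_notMem fun r hr =>
      Set.eq_empty_iff_forall_notMem.mp hV _ (toLp_mem_zeroSet_of_mem_roots hr)
    have hdeg : g.natDegree = 0 := by rw [hg.natDegree_eq_card_roots, hroots, Multiset.card_zero]
    rw [iterate_derivative_eq_zero (by omega : g.natDegree < k), Polynomial.eval_zero, norm_zero,
      zero_div]
    exact pow_nonneg (div_nonneg D.cast_nonneg infDist_nonneg) k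
  · have hd : 0 < infDist p V :=
      (isClosed_eq ((continuous_eval f).comp (PiLp.continuous_ofLp 2 _)) continuous_const
        |>.notMem_iff_infDist_pos hV).mp hp
    have hroots (r : ℂ) (hr : r ∈ g.roots) : infDist p V ≤ ‖p 0 - r‖ :=
      (infDist_le_dist_of_mem (toLp_mem_zeroSet_of_mem_roots hr)).trans_eq
        (EuclideanSpace.dist_toLp_fin_two_left p r)
    calc _ ≤ (g.natDegree / infDist p V) ^ k :=
          hg.norm_eval_iterate_derivative_div_le hd hroots hgz k
      _ ≤ (D / infDist p V) ^ k := by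
          gcongr
          exact hD ▸ natDegree_restrictHorizontal_le _ _

theorem stmt17 (f : MvPolynomial (Fin 2) ℂ)
    (D : ℕ) (hD : f.totalDegree = D) (hD1 : 1 ≤ D)
    (p : EuclideanSpace ℂ (Fin 2)) (hp : MvPolynomial.eval p f ≠ 0)
    (k : ℕ) (hk1 : 1 ≤ k) (hkD : k ≤ D) :
    ‖MvPolynomial.eval p ((MvPolynomial.pderiv (0 : Fin 2))^[k] f)‖
        * ‖MvPolynomial.eval p f‖⁻¹
      ≤ (D / infDist p {x : EuclideanSpace ℂ (Fin 2) | MvPolynomial.eval x f = 0}) ^ k :=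
  stmt17_general f D hD p hp k hk1
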